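/- Let k ≤ n be natural numbers, k ≥ 1. In the polynomial ring over a commutative ring in variables x_1,...,x_n, the ideal generated by {e_1(x_1,...,x_n), ..., e_k(x_1,...,x_n)} equals the ideal generated by {h_1(x_1,...,x_n), h_2(x_1,...,x_{n-1}), ..., h_k(x_1,...,x_{n-k+1})}. -/

import Mathlib

open MvPolynomial Finset

/-- Elementary symmetric polynomial of degree `k` in the first `m` variables `x_1,…,x_m`
(0-indexed: the variables `X i` with `(i : ℕ) < m`), viewed in the polynomial ring in
`n` variables. It is `1` for `k = 0` and `0` for `k > m`. -/
noncomputable def esymb (R : Type) [CommRing R] (n m k : ℕ) : MvPolynomial (Fin n) R :=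
  ∑ S ∈ (Finset.univ.filter (fun i : Fin n => (i : ℕ) < m)).powersetCard k, ∏ i ∈ S, X i

/-- Complete homogeneous symmetric polynomial of degree `k` in the first `m` variables
`x_1,…,x_m` (0-indexed: the variables `X i` with `(i : ℕ) < m`), viewed in the polynomial
ring in `n` variables. It is `1` for `k = 0` and, for `k > 0`, it is `0` when `m = 0`. -/
noncomputable def hsymb (R : Type) [CommRing R] (n m k : ℕ) : MvPolynomial (Fin n) R :=
  ∑ μ ∈ (Finset.univ.filter (fun i : Fin n => (i : ℕ) < m)).sym k,
    ((μ : Multiset (Fin n)).map X).prod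

/-
With `E_p(t) = ∏_{i<p} (1 + x_i t)` and `H_q(t) = ∏_{i<q} (1 - x_i t)⁻¹`, for `q ≤ p` the
product `E_p(-t) H_q(t) = ∏_{q ≤ i < p} (1 - x_i t)` is a polynomial of degree `p - q`, so
`∑_{i+j=k} (-1)^i e_i(x_1,…,x_p) h_j(x_1,…,x_q) = 0` for `k > p - q`. This is proved by
induction from the recurrences
`e_{k+1}(x_1,…,x_{m+1}) = e_{k+1}(x_1,…,x_m) + x_{m+1} e_k(x_1,…,x_m)` and
`h_{k+1}(x_1,…,x_{m+1}) = h_{k+1}(x_1,…,x_m) + x_{m+1} h_k(x_1,…,x_{m+1})`.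
For `p = n`, `q = n + 1 - j`, `k = j` it says `h_j(x_1,…,x_{n+1-j}) ≡ ±e_j` modulo
`⟨e_1,…,e_{j-1}⟩`, so the two families of generators differ by a unitriangular change of basis.
-/

theorem Multiset.esymm_cons_succ {A : Type*} [CommSemiring A] (a : A) (s : Multiset A) (k : ℕ) :
    (a ::ₘ s).esymm (k + 1) = s.esymm (k + 1) + a * s.esymm k := by
  simp only [Multiset.esymm, Multiset.powersetCard_cons, Multiset.map_add, Multiset.sum_add,
    Multiset.map_map, Function.comp_def, Multiset.prod_cons, Multiset.sum_map_mul_left]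

theorem Finset.sum_powersetCard_succ_insert_prod {α A : Type*} [DecidableEq α] [CommSemiring A]
    {a : α} {s : Finset α} (ha : a ∉ s) (f : α → A) (k : ℕ) :
    ∑ S ∈ (insert a s).powersetCard (k + 1), ∏ i ∈ S, f i =
      ∑ S ∈ s.powersetCard (k + 1), ∏ i ∈ S, f i +
        f a * ∑ S ∈ s.powersetCard k, ∏ i ∈ S, f i := by
  simp only [← Finset.esymm_map_val, Finset.insert_val_of_notMem ha, Multiset.map_cons,
    Multiset.esymm_cons_succ]

theorem Finset.sym_succ_insert {α : Type*} [DecidableEq α] (a : α) (s : Finset α) (k : ℕ) :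
    (insert a s).sym (k + 1) = s.sym (k + 1) ∪ ((insert a s).sym k).image (Sym.cons a) := by
  ext μ
  simp only [mem_sym_iff, mem_union, mem_image, mem_insert]
  constructor
  · intro hμ
    by_cases haμ : a ∈ μ
    · obtain ⟨ν, rfl⟩ := Sym.exists_cons_of_mem haμ
      exact Or.inr ⟨ν, fun b hb => hμ b (Sym.mem_cons_of_mem hb), rfl⟩
    · exact Or.inl fun b hb => (hμ b hb).resolve_left fun hba => haμ (hba ▸ hb)
  · rintro (hμ | ⟨ν, hν, rfl⟩) b hb
    · exact Or.inr (hμ b hb)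
    · exact (Sym.mem_cons.1 hb).elim Or.inl (hν b)

theorem Finset.sum_sym_succ_insert_prod {α A : Type*} [DecidableEq α] [CommSemiring A]
    {a : α} {s : Finset α} (ha : a ∉ s) (f : α → A) (k : ℕ) :
    ∑ μ ∈ (insert a s).sym (k + 1), ((μ : Multiset α).map f).prod =
      ∑ μ ∈ s.sym (k + 1), ((μ : Multiset α).map f).prod +
        f a * ∑ μ ∈ (insert a s).sym k, ((μ : Multiset α).map f).prod := by
  have hdisj : Disjoint (s.sym (k + 1)) (((insert a s).sym k).image (Sym.cons a)) := by
    refine disjoint_left.2 fun μ hμ hμ' => ?_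
    obtain ⟨ν, -, rfl⟩ := mem_image.1 hμ'
    exact ha (mem_sym_iff.1 hμ a (Sym.mem_cons_self a ν))
  rw [sym_succ_insert, sum_union hdisj,
    sum_image fun μ _ ν _ h => (Sym.cons_inj_right a μ ν).1 h, mul_sum]
  simp only [Sym.coe_cons, Multiset.map_cons, Multiset.prod_cons]

theorem Ideal.span_image_Icc_eq_of_triangular {A : Type*} [CommRing A] (e f u : ℕ → A)
    (hu : ∀ j, IsUnit (u j)) (k : ℕ)
    (h : ∀ j ∈ Set.Icc 1 k, f j - u j * e j ∈ Ideal.span (e '' Set.Ico 1 j)) :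
    Ideal.span (e '' Set.Icc 1 k) = Ideal.span (f '' Set.Icc 1 k) := by
  apply le_antisymm <;> rw [Ideal.span_le]
  · suffices ∀ j ∈ Set.Icc 1 k, e j ∈ Ideal.span (f '' Set.Icc 1 k) by
      rintro _ ⟨j, hj, rfl⟩
      exact this j hj
    intro j
    induction j using Nat.strong_induction_on with
    | _ j ih =>
      intro hj
      have hlower : Ideal.span (e '' Set.Ico 1 j) ≤ Ideal.span (f '' Set.Icc 1 k) := by
        rw [Ideal.span_le]
        rintro _ ⟨i, hi, rfl⟩
        exact ih i hi.2 ⟨hi.1, hi.2.le.trans hj.2⟩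
      obtain ⟨v, hv⟩ := (hu j).exists_left_inv
      rw [show e j = v * (f j - (f j - u j * e j)) by
        rw [sub_sub_cancel, ← mul_assoc, hv, one_mul]]
      exact Ideal.mul_mem_left _ _ (sub_mem (Ideal.subset_span ⟨j, hj, rfl⟩) (hlower (h j hj)))
  · rintro _ ⟨j, hj, rfl⟩
    have hlower : Ideal.span (e '' Set.Ico 1 j) ≤ Ideal.span (e '' Set.Icc 1 k) :=
      Ideal.span_mono (Set.image_mono fun i hi => ⟨hi.1, hi.2.le.trans hj.2⟩)
    rw [← sub_add_cancel (f j) (u j * e j)]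
    exact add_mem (hlower (h j hj)) (Ideal.mul_mem_left _ _ (Ideal.subset_span ⟨j, hj, rfl⟩))

lemma filter_val_lt_succ {n m : ℕ} (h : m < n) :
    univ.filter (fun i : Fin n => (i : ℕ) < m + 1) =
      insert ⟨m, h⟩ (univ.filter (fun i : Fin n => (i : ℕ) < m)) := by
  ext i
  simp only [mem_filter, mem_univ, true_and, mem_insert, Fin.ext_iff]
  omega

lemma mk_notMem_filter_val_lt {n m : ℕ} (h : m < n) :
    (⟨m, h⟩ : Fin n) ∉ univ.filter (fun i : Fin n => (i : ℕ) < m) := by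
  simp

section

variable (R : Type) [CommRing R] (n : ℕ)

lemma esymb_zero_right (m : ℕ) : esymb R n m 0 = 1 := by
  simp [esymb]

lemma hsymb_zero_right (m : ℕ) : hsymb R n m 0 = 1 := by
  simp only [hsymb, sym_zero, sum_singleton]
  rfl

lemma esymb_zero_succ (k : ℕ) : esymb R n 0 (k + 1) = 0 := by
  rw [esymb, powersetCard_eq_empty.2 (by simp), sum_empty]

lemma hsymb_zero_succ (k : ℕ) : hsymb R n 0 (k + 1) = 0 := by
  simp [hsymb]

lemma esymb_succ_succ {m : ℕ} (h : m < n) (k : ℕ) :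
    esymb R n (m + 1) (k + 1) = esymb R n m (k + 1) + X ⟨m, h⟩ * esymb R n m k := by
  rw [esymb, filter_val_lt_succ h,
    sum_powersetCard_succ_insert_prod (mk_notMem_filter_val_lt h), esymb, esymb]

lemma hsymb_succ_succ {m : ℕ} (h : m < n) (k : ℕ) :
    hsymb R n (m + 1) (k + 1) = hsymb R n m (k + 1) + X ⟨m, h⟩ * hsymb R n (m + 1) k := by
  rw [hsymb, filter_val_lt_succ h,
    sum_sym_succ_insert_prod (mk_notMem_filter_val_lt h), hsymb, hsymb, filter_val_lt_succ h]

noncomputable def ehConv (p q k : ℕ) : MvPolynomial (Fin n) R :=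
  ∑ ij ∈ antidiagonal k, (-1) ^ ij.1 * esymb R n p ij.1 * hsymb R n q ij.2

lemma ehConv_hsymb_succ {m : ℕ} (h : m < n) (p k : ℕ) :
    ehConv R n p (m + 1) (k + 1) =
      ehConv R n p m (k + 1) + X ⟨m, h⟩ * ehConv R n p (m + 1) k := by
  simp only [ehConv, Nat.sum_antidiagonal_succ', hsymb_succ_succ R n h, hsymb_zero_right, mul_add,
    sum_add_distrib, mul_sum]
  rw [add_assoc]
  congr 2
  exact sum_congr rfl fun _ _ => by ring

lemma ehConv_esymb_succ {m : ℕ} (h : m < n) (q k : ℕ) :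
    ehConv R n (m + 1) q (k + 1) = ehConv R n m q (k + 1) - X ⟨m, h⟩ * ehConv R n m q k := by
  simp only [ehConv, Nat.sum_antidiagonal_succ, esymb_succ_succ R n h, esymb_zero_right, mul_add,
    add_mul, sum_add_distrib, mul_sum]
  rw [add_sub_assoc, sub_eq_add_neg, ← sum_neg_distrib]
  congr 2
  exact sum_congr rfl fun _ _ => by ring

lemma ehConv_self_succ {m : ℕ} (hm : m ≤ n) (k : ℕ) : ehConv R n m m (k + 1) = 0 := by
  induction m with
  | zero =>
    simp [ehConv, Nat.sum_antidiagonal_succ, hsymb_zero_succ, esymb_zero_succ]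
  | succ m ih =>
    have h : m < n := hm
    rw [ehConv_esymb_succ R n h, ehConv_hsymb_succ R n h, ih h.le]
    ring

lemma ehConv_eq_zero {p q k : ℕ} (hqp : q ≤ p) (hp : p ≤ n) (hk : p - q < k) :
    ehConv R n p q k = 0 := by
  induction p, hqp using Nat.le_induction generalizing k with
  | base =>
    obtain ⟨k, rfl⟩ := Nat.exists_eq_succ_of_ne_zero (by omega : k ≠ 0)
    exact ehConv_self_succ R n hp k
  | succ p hqp ih =>
    obtain ⟨k, rfl⟩ := Nat.exists_eq_succ_of_ne_zero (by omega : k ≠ 0)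
    rw [ehConv_esymb_succ R n hp, ih (by omega) (by omega), ih (by omega) (by omega)]
    ring

lemma hsymb_sub_esymb_mem_span {j : ℕ} (hj : 1 ≤ j) :
    hsymb R n (n + 1 - j) j - (-1) ^ (j + 1) * esymb R n n j ∈
      Ideal.span (esymb R n n '' Set.Ico 1 j) := by
  obtain ⟨j, rfl⟩ := Nat.exists_eq_add_of_le' hj
  have hzero := ehConv_eq_zero R n (p := n) (q := n - j) (k := j + 1) (by omega) le_rfl (by omega)
  have hj0 : (j, 0) ∈ antidiagonal j := mem_antidiagonal.2 (add_zero j)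
  -- the term `(j, 0)` is `±e_{j+1}`, the others involve `e_i` with `1 ≤ i ≤ j`
  rw [ehConv, Nat.sum_antidiagonal_succ, ← add_sum_erase _ _ hj0] at hzero
  simp only [pow_zero, esymb_zero_right, hsymb_zero_right, one_mul, mul_one] at hzero
  rw [show n + 1 - (j + 1) = n - j by omega,
    show hsymb R n (n - j) (j + 1) - (-1) ^ (j + 1 + 1) * esymb R n n (j + 1) =
      -∑ ij ∈ (antidiagonal j).erase (j, 0),
        (-1) ^ (ij.1 + 1) * esymb R n n (ij.1 + 1) * hsymb R n (n - j) ij.2 by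
      linear_combination hzero]
  refine neg_mem (Ideal.sum_mem _ fun ij hij => ?_)
  obtain ⟨hne, hsum⟩ := mem_erase.1 hij
  rw [HasAntidiagonal.mem_antidiagonal] at hsum
  have hlt : ij.1 < j := by
    by_contra
    exact hne (Prod.ext (by omega) (by omega))
  exact Ideal.mul_mem_right _ _
    (Ideal.mul_mem_left _ _ (Ideal.subset_span ⟨ij.1 + 1, ⟨by omega, by omega⟩, rfl⟩))

end

theorem stmt6_general (R : Type) [CommRing R] (n k : ℕ) :
    Ideal.span ((fun i => esymb R n n i) '' Set.Icc 1 k) =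
      Ideal.span ((fun i => hsymb R n (n + 1 - i) i) '' Set.Icc 1 k) :=
  Ideal.span_image_Icc_eq_of_triangular _ _ (fun j => (-1) ^ (j + 1))
    (fun _ => isUnit_neg_one.pow _) k fun _ hj => hsymb_sub_esymb_mem_span R n hj.1

/-- ⟨e_1(x_1,…,x_n),…,e_k(x_1,…,x_n)⟩ = ⟨h_1(x_1,…,x_n),…,h_k(x_1,…,x_{n-k+1})⟩. -/
theorem stmt6 (R : Type) [CommRing R] (n k : ℕ) (hk : 1 ≤ k) (hkn : k ≤ n) :
    Ideal.span ((fun i => esymb R n n i) '' Set.Icc 1 k) =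
      Ideal.span ((fun i => hsymb R n (n + 1 - i) i) '' Set.Icc 1 k) :=
  stmt6_general R n k
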